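/- Let S be a nonempty closed convex subset of a uniformly convex, smooth Banach space E and {x_n} ⊂ E a sequence such that φ(u, x_{n+1}) ≤ φ(u, x_n) for all u ∈ S and all n ≥ 1. Then the sequence of generalized projections {Π_S(x_n)} is Cauchy. -/

import Mathlib

/-! Write `pₙ = Π_S xₙ` and `aₙ = φ(pₙ, xₙ) ≥ 0`. For `n ≤ m` the midpoint of `pₙ` and `pₘ` lies
in `S`, so it competes with `pₘ` in the definition of `Π_S xₘ`; since `φ` is affine in its first
argument up to the squared norm, and `φ(pₙ, xₘ) ≤ φ(pₙ, xₙ)`, this yields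
`(‖pₙ‖² + ‖pₘ‖²)/2 - ‖(pₙ + pₘ)/2‖² ≤ (aₙ - aₘ)/2`.
Choosing `N` with `a_N` close to `inf aₙ` makes the left side small for `N ≤ m`. The `pₙ` are
bounded, and on bounded sets of a uniformly convex space a small midpoint defect of the squared
norm forces `‖pₙ - pₘ‖` to be small. -/

open Set

section UniformConvex

variable {E : Type*} [NormedAddCommGroup E] [NormedSpace ℝ E] [UniformConvexSpace E] {ε R : ℝ}

theorem exists_forall_norm_le_norm_add_le_two_sub_mul (hε : 0 < ε) (hR : 0 < R) :
    ∃ δ, 0 < δ ∧ ∀ ⦃r⦄, r ≤ R → ∀ ⦃x : E⦄, ‖x‖ ≤ r → ∀ ⦃y⦄, ‖y‖ ≤ r → ε ≤ ‖x - y‖ →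
      ‖x + y‖ ≤ (2 - δ) * r := by
  obtain ⟨δ, hδ, h⟩ := exists_forall_closed_ball_dist_add_le_two_sub E (div_pos hε hR)
  refine ⟨δ, hδ, fun r hrR x hx y hy hxy => ?_⟩
  have hr : 0 < r := by linarith [norm_sub_le x y]
  have hr' : 0 ≤ r⁻¹ := inv_nonneg.2 hr.le
  have hscaled := h (x := r⁻¹ • x) (y := r⁻¹ • y)
    (by rwa [norm_smul_of_nonneg hr', inv_mul_le_iff₀ hr, mul_one])
    (by rwa [norm_smul_of_nonneg hr', inv_mul_le_iff₀ hr, mul_one])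
    (by
      rw [← smul_sub, norm_smul_of_nonneg hr', ← div_eq_inv_mul]
      calc ε / R ≤ ε / r := div_le_div_of_nonneg_left hε.le hr hrR
        _ ≤ ‖x - y‖ / r := by gcongr)
  rw [← smul_add, norm_smul_of_nonneg hr', inv_mul_le_iff₀ hr] at hscaled
  linarith

theorem exists_forall_norm_le_sq_norm_add_le (hε : 0 < ε) (hR : 0 < R) :
    ∃ c > 0, ∀ ⦃p q : E⦄, ‖p‖ ≤ R → ‖q‖ ≤ R → ε ≤ ‖p - q‖ →
      c ≤ (‖p‖ ^ 2 + ‖q‖ ^ 2) / 2 - ‖p + q‖ ^ 2 / 4 := by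
  obtain ⟨δ, hδ, h⟩ := exists_forall_norm_le_norm_add_le_two_sub_mul (E := E) hε hR
  refine ⟨(δ * ε) ^ 2 / 32, by positivity, fun p q hp hq hpq => ?_⟩
  wlog hqp : ‖q‖ ≤ ‖p‖ generalizing p q
  · rw [add_comm (‖p‖ ^ 2), add_comm p]
    exact this q p hq hp (by rwa [norm_sub_rev]) (le_of_not_ge hqp)
  have hsum : ‖p + q‖ ≤ (2 - δ) * ‖p‖ := h hp le_rfl hqp hpq
  have hεp : ε ≤ 2 * ‖p‖ := by linarith [norm_sub_le p q]
  have htri := norm_add_le p q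
  have hδε : δ * ε ≤ 2 * (2 * ‖p‖ - ‖p + q‖) := by nlinarith
  -- `2 (‖p‖² + ‖q‖²) - ‖p + q‖² = (‖p‖ - ‖q‖)² + (‖p‖ + ‖q‖)² - ‖p + q‖²`
  have hsplit : (2 * ‖p‖ - ‖p + q‖) ^ 2 ≤ 2 * ((‖p‖ - ‖q‖) ^ 2 + (‖p‖ + ‖q‖ - ‖p + q‖) ^ 2) := by
    nlinarith [sq_nonneg (‖p‖ - ‖q‖ - (‖p‖ + ‖q‖ - ‖p + q‖))]
  have hdiff : (‖p‖ + ‖q‖ - ‖p + q‖) ^ 2 ≤ (‖p‖ + ‖q‖) ^ 2 - ‖p + q‖ ^ 2 := by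
    nlinarith [norm_nonneg (p + q)]
  nlinarith [pow_le_pow_left₀ (by positivity) hδε 2]

theorem cauchySeq_of_sq_norm_add_le_sub {p : ℕ → E} {a : ℕ → ℝ} (hp : ∀ n, ‖p n‖ ≤ R)
    (ha : BddBelow (range a))
    (hpa : ∀ n m, n ≤ m → (‖p n‖ ^ 2 + ‖p m‖ ^ 2) / 2 - ‖p n + p m‖ ^ 2 / 4 ≤ a n - a m) :
    CauchySeq p := by
  rw [Metric.cauchySeq_iff']
  intro ε hε
  have hR : ∀ n, ‖p n‖ ≤ max R 1 := fun n => (hp n).trans (le_max_left _ _)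
  obtain ⟨c, hc, hgap⟩ := exists_forall_norm_le_sq_norm_add_le (E := E) hε
    (lt_max_of_lt_right one_pos)
  obtain ⟨N, hN⟩ := exists_lt_of_ciInf_lt (lt_add_of_pos_right (⨅ n, a n) hc)
  refine ⟨N, fun n hn => ?_⟩
  by_contra! hfar
  rw [dist_eq_norm, norm_sub_rev] at hfar
  linarith [hgap (hR N) (hR n) hfar, hpa N n hn, ciInf_le ha n]

end UniformConvex

section Lyapunov

variable {E : Type*} [NormedAddCommGroup E] [NormedSpace ℝ E] {J : E → StrongDual ℝ E}

noncomputable def lyapunovFunctional (J : E → StrongDual ℝ E) (u v : E) : ℝ :=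
  ‖u‖ ^ 2 - 2 * J v u + ‖v‖ ^ 2

theorem sq_norm_sub_norm_le_lyapunovFunctional (hJ : ∀ v, ‖J v‖ ≤ ‖v‖) (u v : E) :
    (‖u‖ - ‖v‖) ^ 2 ≤ lyapunovFunctional J u v := by
  have hJvu : J v u ≤ ‖v‖ * ‖u‖ :=
    (Real.le_norm_self _).trans <| (J v).le_of_opNorm_le (hJ v) u
  rw [lyapunovFunctional]
  nlinarith

theorem lyapunovFunctional_nonneg (hJ : ∀ v, ‖J v‖ ≤ ‖v‖) (u v : E) :
    0 ≤ lyapunovFunctional J u v :=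
  (sq_nonneg _).trans (sq_norm_sub_norm_le_lyapunovFunctional hJ u v)

theorem abs_norm_sub_norm_le_sqrt_lyapunovFunctional (hJ : ∀ v, ‖J v‖ ≤ ‖v‖) (u v : E) :
    |‖u‖ - ‖v‖| ≤ √(lyapunovFunctional J u v) :=
  Real.abs_le_sqrt (sq_norm_sub_norm_le_lyapunovFunctional hJ u v)

theorem lyapunovFunctional_midpoint (u v x : E) :
    lyapunovFunctional J ((2⁻¹ : ℝ) • u + (2⁻¹ : ℝ) • v) x =
      (lyapunovFunctional J u x + lyapunovFunctional J v x) / 2 -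
        ((‖u‖ ^ 2 + ‖v‖ ^ 2) / 2 - ‖u + v‖ ^ 2 / 4) := by
  have hmid : ‖(2⁻¹ : ℝ) • u + (2⁻¹ : ℝ) • v‖ = ‖u + v‖ / 2 := by
    rw [← smul_add, norm_smul_of_nonneg (by norm_num), inv_mul_eq_div]
  simp only [lyapunovFunctional, hmid, map_add, map_smul, smul_eq_mul]
  ring

def IsGeneralizedProjection (J : E → StrongDual ℝ E) (S : Set E) (P : E → E) : Prop :=
  ∀ x, P x ∈ S ∧ ∀ u ∈ S, lyapunovFunctional J (P x) x ≤ lyapunovFunctional J u x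

variable {S : Set E} {P : E → E}

theorem IsGeneralizedProjection.norm_le (hP : IsGeneralizedProjection J S P)
    (hJ : ∀ v, ‖J v‖ ≤ ‖v‖) {u : E} (hu : u ∈ S) (x : E) :
    ‖P x‖ ≤ ‖u‖ + 2 * √(lyapunovFunctional J u x) := by
  have hx := abs_le.1 (abs_norm_sub_norm_le_sqrt_lyapunovFunctional hJ u x)
  have hPx := abs_le.1 (abs_norm_sub_norm_le_sqrt_lyapunovFunctional hJ (P x) x)
  have hsqrt := Real.sqrt_le_sqrt ((hP x).2 u hu)
  linarith [hx.1, hPx.2]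

theorem IsGeneralizedProjection.sq_norm_add_le (hP : IsGeneralizedProjection J S P)
    (hS : Convex ℝ S) {x x' : E}
    (hxx' : lyapunovFunctional J (P x) x' ≤ lyapunovFunctional J (P x) x) :
    (‖P x‖ ^ 2 + ‖P x'‖ ^ 2) / 2 - ‖P x + P x'‖ ^ 2 / 4 ≤
      (lyapunovFunctional J (P x) x - lyapunovFunctional J (P x') x') / 2 := by
  have hmid := (hP x').2 ((2⁻¹ : ℝ) • P x + (2⁻¹ : ℝ) • P x') (hS (hP x).1 (hP x').1 (by norm_num) (by norm_num) (by norm_num))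
  rw [lyapunovFunctional_midpoint] at hmid
  linarith

theorem IsGeneralizedProjection.cauchySeq_comp [UniformConvexSpace E] (hP : IsGeneralizedProjection J S P)
    (hJ : ∀ v, ‖J v‖ ≤ ‖v‖) (hS : Convex ℝ S) (hSne : S.Nonempty) {x : ℕ → E}
    (hx : ∀ u ∈ S, Antitone fun n => lyapunovFunctional J u (x n)) :
    CauchySeq fun n => P (x n) := by
  obtain ⟨u, hu⟩ := hSne
  refine cauchySeq_of_sq_norm_add_le_sub
    (R := ‖u‖ + 2 * √(lyapunovFunctional J u (x 0)))
    (a := fun n => lyapunovFunctional J (P (x n)) (x n) / 2) (fun n => ?_) ⟨0, ?_⟩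
    (fun n m hnm => ?_)
  · exact (hP.norm_le hJ hu _).trans (by gcongr; exact hx u hu n.zero_le)
  · rintro _ ⟨n, rfl⟩
    exact div_nonneg (lyapunovFunctional_nonneg hJ _ _) two_pos.le
  · rw [← sub_div]
    exact hP.sq_norm_add_le hS (hx _ (hP _).1 hnm)

end Lyapunov

theorem generalized_projections_cauchy_general
    {E : Type*} [NormedAddCommGroup E] [NormedSpace ℝ E]
    [UniformConvexSpace E]
    (J : E → StrongDual ℝ E)
    (hJnorm : ∀ u, ‖J u‖ = ‖u‖)
    (φ : E → E → ℝ) (hφ : ∀ u v, φ u v = ‖u‖ ^ 2 - 2 * J v u + ‖v‖ ^ 2)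
    (S : Set E) (hSne : S.Nonempty) (hSconv : Convex ℝ S)
    -- the generalized (Alber) projection onto `S`
    (P : E → E) (hP : ∀ x, P x ∈ S ∧ ∀ u ∈ S, φ (P x) x ≤ φ u x)
    (x : ℕ → E) (hx : ∀ u ∈ S, ∀ n : ℕ, 1 ≤ n → φ u (x (n + 1)) ≤ φ u (x n)) :
    CauchySeq (fun n => P (x n)) := by
  obtain rfl : φ = lyapunovFunctional J := funext₂ hφ
  have hshift : ∀ u ∈ S, Antitone fun n => lyapunovFunctional J u (x (n + 1)) :=
    fun u hu => antitone_nat_of_succ_le fun n => hx u hu (n + 1) (Nat.le_add_left 1 n)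
  exact (cauchySeq_shift 1).1 <|
    IsGeneralizedProjection.cauchySeq_comp hP (fun v => (hJnorm v).le) hSconv hSne hshift

/-- Let `S` be a nonempty closed convex subset of a uniformly convex, smooth
Banach space and `{xₙ}` a sequence with `φ(u, x_{n+1}) ≤ φ(u, xₙ)` for all `u ∈ S` and all
`n`. Then the sequence of generalized projections `{Π_S(xₙ)}` is Cauchy. -/
theorem generalized_projections_cauchy
    {E : Type*} [NormedAddCommGroup E] [NormedSpace ℝ E] [CompleteSpace E]
    [UniformConvexSpace E]
    (J : E → StrongDual ℝ E)
    (hJ : ∀ u, J u u = ‖u‖ ^ 2) (hJnorm : ∀ u, ‖J u‖ = ‖u‖)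
    (φ : E → E → ℝ) (hφ : ∀ u v, φ u v = ‖u‖ ^ 2 - 2 * J v u + ‖v‖ ^ 2)
    (S : Set E) (hSne : S.Nonempty) (hScl : IsClosed S) (hSconv : Convex ℝ S)
    -- the generalized (Alber) projection onto `S`
    (P : E → E) (hP : ∀ x, P x ∈ S ∧ ∀ u ∈ S, φ (P x) x ≤ φ u x)
    (x : ℕ → E) (hx : ∀ u ∈ S, ∀ n : ℕ, 1 ≤ n → φ u (x (n + 1)) ≤ φ u (x n)) :
    CauchySeq (fun n => P (x n)) :=
  generalized_projections_cauchy_general J hJnorm φ hφ S hSne hSconv P hP x hx
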